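/- (Observed-component bound after the EnKF-AI update) In the EnKF-AI setting described in the context, writing the updated member as V⁽ᵏ⁾ = (X⁽ᵏ⁾, Y⁽ᵏ⁾) with X⁽ᵏ⁾ ∈ ℝ^q, for every k = 1,…,K one has |X⁽ᵏ⁾|² ≤ 2ρ₀⁻¹·K·max{M₁², ρ₀⁻²c_φ⁻²} + 2ρ₀⁻¹·|Z⁽ᵏ⁾|². -/

import Mathlib

/-!
Put `A = I + H C̃ Hᵀ` and `u = A⁻¹ (H V̂⁽ᵏ⁾ − Z⁽ᵏ⁾)`. The update gives `H V⁽ᵏ⁾ = Z⁽ᵏ⁾ + u`, that is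
`h_i X⁽ᵏ⁾_i = Z⁽ᵏ⁾_i + u_i`, so `ρ₀ |X⁽ᵏ⁾|² ≤ 2 |Z⁽ᵏ⁾|² + 2 |u|²`. As `Ĉ` is positive semidefinite
and `H Hᵀ ≥ ρ₀ I`, `A ≥ (1 + λρ₀) I`, whence `(1 + λρ₀) |u| ≤ |H V̂⁽ᵏ⁾ − Z⁽ᵏ⁾| ≤ √K Θ`.
If `Θ ≤ M₁` this gives `|u|² ≤ K M₁²`; otherwise the inflation is active, `λ ≥ c_φ Θ`, and
`c_φ Θ ρ₀ |u| ≤ √K Θ` gives `|u|² ≤ K ρ₀⁻² c_φ⁻²`.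
-/

open Matrix BigOperators

noncomputable def enormSq {ι : Type*} [Fintype ι] (v : ι → ℝ) : ℝ := ∑ i, v i ^ 2

noncomputable def enorm {ι : Type*} [Fintype ι] (v : ι → ℝ) : ℝ := Real.sqrt (∑ i, v i ^ 2)

noncomputable def specNorm {ι κ : Type*} [Fintype ι] [Fintype κ] [DecidableEq κ]
    (M : Matrix ι κ ℝ) : ℝ :=
  ‖LinearMap.toContinuousLinearMap (Matrix.toEuclideanLin M)‖

noncomputable def adaptiveInflation (cphi M₁ M₂ x y : ℝ) : ℝ :=
  if x > M₁ ∨ y > M₂ then cphi * x * (1 + y) else 0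

section
variable {m n : Type*} [Fintype m] [Fintype n]

lemma enormSq_nonneg (v : n → ℝ) : 0 ≤ enormSq v :=
  Finset.sum_nonneg fun _ _ => sq_nonneg _

lemma enormSq_eq_dotProduct_self (v : n → ℝ) : enormSq v = v ⬝ᵥ v := by
  simp only [enormSq, dotProduct, sq]

lemma enormSq_add_le (a b : n → ℝ) : enormSq (a + b) ≤ 2 * enormSq a + 2 * enormSq b := by
  simp only [enormSq, Finset.mul_sum, ← Finset.sum_add_distrib, Pi.add_apply]
  exact Finset.sum_le_sum fun i _ => by nlinarith [sq_nonneg (a i - b i)]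

lemma mul_enormSq_le_enormSq_mul {h : n → ℝ} {ρ : ℝ} (hρ : ∀ i, ρ ≤ h i ^ 2) (x : n → ℝ) :
    ρ * enormSq x ≤ enormSq (h * x) := by
  simp only [enormSq, Finset.mul_sum, Pi.mul_apply, mul_pow]
  exact Finset.sum_le_sum fun i _ => mul_le_mul_of_nonneg_right (hρ i) (sq_nonneg _)

lemma sq_dotProduct_le_enormSq_mul_enormSq (u v : n → ℝ) :
    (u ⬝ᵥ v) ^ 2 ≤ enormSq u * enormSq v :=
  Finset.sum_mul_sq_le_sq_mul_sq _ u v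

-- Cauchy–Schwarz in `c |u|² ≤ ⟪u, A u⟫ ≤ |u| |A u|`.
lemma sq_mul_enormSq_le_enormSq_mulVec {A : Matrix n n ℝ} {c : ℝ} (hc : 0 ≤ c)
    (hA : ∀ x, c * enormSq x ≤ x ⬝ᵥ A *ᵥ x) (u : n → ℝ) :
    c ^ 2 * enormSq u ≤ enormSq (A *ᵥ u) := by
  have hu := enormSq_nonneg u
  have hsq : (c * enormSq u) ^ 2 ≤ enormSq u * enormSq (A *ᵥ u) :=
    (pow_le_pow_left₀ (mul_nonneg hc hu) (hA u) 2).trans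
      (sq_dotProduct_le_enormSq_mul_enormSq _ _)
  rcases hu.eq_or_lt with hzero | hpos
  · rw [← hzero, mul_zero]
    exact enormSq_nonneg _
  · refine le_of_mul_le_mul_right ?_ hpos
    linarith

lemma isUnit_of_coercive [DecidableEq n] {A : Matrix n n ℝ} {c : ℝ} (hc : 0 < c)
    (hA : ∀ x, c * enormSq x ≤ x ⬝ᵥ A *ᵥ x) : IsUnit A := by
  refine Matrix.mulVec_injective_iff_isUnit.mp fun u v huv => ?_
  have hbound := sq_mul_enormSq_le_enormSq_mulVec hc.le hA (u - v)
  rw [Matrix.mulVec_sub, huv, sub_self, show enormSq (0 : n → ℝ) = 0 by simp [enormSq]] at hbound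
  have hzero : enormSq (u - v) = 0 :=
    le_antisymm (nonpos_of_mul_nonpos_right hbound (by positivity)) (enormSq_nonneg _)
  rw [enormSq_eq_dotProduct_self, dotProduct_self_eq_zero] at hzero
  exact sub_eq_zero.mp hzero

lemma posSemidef_smul_sum_vecMulVec_self {ι : Type*} (s : Finset ι) {c : ℝ} (hc : 0 ≤ c)
    (w : ι → n → ℝ) : (c • ∑ k ∈ s, vecMulVec (w k) (w k)).PosSemidef :=
  (posSemidef_sum s fun k _ => by
    simpa only [star_trivial] using posSemidef_vecMulVec_self_star (w k)).smul hc

lemma one_add_mul_inflated_mul_transpose_coercive [DecidableEq m] [DecidableEq n]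
    {H : Matrix m n ℝ} {C : Matrix n n ℝ} (hC : C.PosSemidef) {lam ρ : ℝ} (hlam : 0 ≤ lam)
    (hH : ∀ x, ρ * enormSq x ≤ x ⬝ᵥ (H * Hᵀ) *ᵥ x) (x : m → ℝ) :
    (1 + lam * ρ) * enormSq x ≤ x ⬝ᵥ (1 + H * (C + lam • 1) * Hᵀ) *ᵥ x := by
  have hsplit : 1 + H * (C + lam • 1) * Hᵀ = 1 + H * C * Hᵀ + lam • (H * Hᵀ) := by
    rw [Matrix.mul_add, Matrix.add_mul, Matrix.mul_smul, Matrix.smul_mul, Matrix.mul_one, add_assoc]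
  have hCx : 0 ≤ x ⬝ᵥ (H * C * Hᵀ) *ᵥ x := by
    simpa only [star_trivial, conjTranspose_eq_transpose_of_trivial] using
      (hC.mul_mul_conjTranspose_same H).dotProduct_mulVec_nonneg x
  rw [hsplit, Matrix.add_mulVec, Matrix.add_mulVec, Matrix.one_mulVec, Matrix.smul_mulVec,
    dotProduct_add, dotProduct_add, dotProduct_smul, smul_eq_mul, ← enormSq_eq_dotProduct_self]
  nlinarith [mul_le_mul_of_nonneg_left (hH x) hlam]

lemma mulVec_sub_gain_mulVec {R : Type*} [CommRing R] [DecidableEq m] {H : Matrix m n R}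
    {C : Matrix n n R} (hA : IsUnit (1 + H * C * Hᵀ)) (v : n → R) (z : m → R) :
    H *ᵥ (v - (C * Hᵀ * (1 + H * C * Hᵀ)⁻¹) *ᵥ (H *ᵥ v - z))
      = z + (1 + H * C * Hᵀ)⁻¹ *ᵥ (H *ᵥ v - z) := by
  set A := 1 + H * C * Hᵀ with hAdef
  have hgain : H * (C * Hᵀ * A⁻¹) = 1 - A⁻¹ := by
    rw [← Matrix.mul_assoc, ← Matrix.mul_assoc, show H * C * Hᵀ = A - 1 by rw [hAdef]; abel,
      Matrix.sub_mul, Matrix.mul_nonsing_inv _ ((Matrix.isUnit_iff_isUnit_det A).mp hA),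
      Matrix.one_mul]
  rw [Matrix.mulVec_sub, Matrix.mulVec_mulVec, hgain, Matrix.sub_mulVec, Matrix.one_mulVec]
  abel

lemma le_card_mul_sq_sqrt_inv_card_mul_sum {ι : Type*} [Fintype ι] {f : ι → ℝ}
    (hf : ∀ i, 0 ≤ f i) (k : ι) :
    f k ≤ Fintype.card ι * √((Fintype.card ι : ℝ)⁻¹ * ∑ i, f i) ^ 2 := by
  have : Nonempty ι := ⟨k⟩
  have hcard : (Fintype.card ι : ℝ) ≠ 0 := Nat.cast_ne_zero.mpr Fintype.card_ne_zero
  rw [Real.sq_sqrt (mul_nonneg (by positivity) (Finset.sum_nonneg fun i _ => hf i)),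
    mul_inv_cancel_left₀ hcard]
  exact Finset.single_le_sum (fun i _ => hf i) (Finset.mem_univ k)

end

section
variable {m p : Type*} [Fintype m] [Fintype p] [DecidableEq m]

lemma fromCols_diagonal_zero_mulVec (h : m → ℝ) (v : m ⊕ p → ℝ) :
    fromCols (diagonal h) (0 : Matrix m p ℝ) *ᵥ v = h * fun i => v (Sum.inl i) := by
  ext i
  simp [Matrix.fromCols_mulVec, Matrix.mulVec_diagonal]

lemma fromCols_diagonal_zero_mul_transpose (h : m → ℝ) :
    fromCols (diagonal h) (0 : Matrix m p ℝ) * (fromCols (diagonal h) (0 : Matrix m p ℝ))ᵀ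
      = diagonal fun i => h i ^ 2 := by
  rw [transpose_fromCols, transpose_zero, diagonal_transpose, fromCols_mul_fromRows,
    Matrix.zero_mul, add_zero, diagonal_mul_diagonal]
  simp only [sq]

end

lemma mul_enormSq_le_dotProduct_diagonal_mulVec {m : Type*} [Fintype m] [DecidableEq m]
    {d : m → ℝ} {ρ : ℝ} (hρ : ∀ i, ρ ≤ d i) (x : m → ℝ) :
    ρ * enormSq x ≤ x ⬝ᵥ diagonal d *ᵥ x := by
  simp only [enormSq, dotProduct, Matrix.mulVec_diagonal, Finset.mul_sum]
  exact Finset.sum_le_sum fun i _ => by nlinarith [hρ i, sq_nonneg (x i)]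

lemma le_mul_max_of_adaptiveInflation_le {cphi M₁ M₂ Θ Ξ lam ρ K U : ℝ} (hcphi : 0 < cphi)
    (hM₁ : 0 < M₁) (hρ : 0 < ρ) (hK : 0 ≤ K) (hΘ : 0 ≤ Θ) (hΞ : 0 ≤ Ξ) (hlam0 : 0 ≤ lam)
    (hlam : adaptiveInflation cphi M₁ M₂ Θ Ξ ≤ lam) (hU0 : 0 ≤ U)
    (hU : (1 + lam * ρ) ^ 2 * U ≤ K * Θ ^ 2) :
    U ≤ K * max (M₁ ^ 2) (ρ⁻¹ ^ 2 * cphi⁻¹ ^ 2) := by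
  rcases le_or_gt Θ M₁ with hsmall | hlarge
  · have hone : 1 ≤ (1 + lam * ρ) ^ 2 := one_le_pow₀ (by nlinarith)
    calc U ≤ (1 + lam * ρ) ^ 2 * U := le_mul_of_one_le_left hU0 hone
      _ ≤ K * M₁ ^ 2 := hU.trans (by gcongr)
      _ ≤ K * max (M₁ ^ 2) (ρ⁻¹ ^ 2 * cphi⁻¹ ^ 2) := by gcongr; exact le_max_left _ _
  · have hΘpos : 0 < Θ := hM₁.trans hlarge
    have hinfl : cphi * Θ * (1 + Ξ) ≤ lam := by
      rwa [adaptiveInflation, if_pos (Or.inl hlarge)] at hlam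
    have hlamΘ : cphi * Θ ≤ lam := by nlinarith [mul_pos hcphi hΘpos]
    have hgrow : (cphi * ρ) ^ 2 * U * Θ ^ 2 ≤ K * Θ ^ 2 :=
      calc (cphi * ρ) ^ 2 * U * Θ ^ 2 = (cphi * Θ * ρ) ^ 2 * U := by ring
        _ ≤ (1 + lam * ρ) ^ 2 * U := by gcongr; nlinarith
        _ ≤ K * Θ ^ 2 := hU
    have hUK : (cphi * ρ) ^ 2 * U ≤ K := le_of_mul_le_mul_right hgrow (by positivity)
    calc U = (cphi * ρ) ^ 2 * U * (ρ⁻¹ ^ 2 * cphi⁻¹ ^ 2) := by field_simp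
      _ ≤ K * (ρ⁻¹ ^ 2 * cphi⁻¹ ^ 2) := by gcongr
      _ ≤ K * max (M₁ ^ 2) (ρ⁻¹ ^ 2 * cphi⁻¹ ^ 2) := by gcongr; exact le_max_right _ _

theorem enkf_ai_observed_component_bound_general {q p K : ℕ} (hK : 2 ≤ K)
    (h : Fin q → ℝ) (hpos : ∀ i, 0 < h i)
    (H : Matrix (Fin q) (Fin q ⊕ Fin p) ℝ)
    (hH : H = Matrix.fromCols (Matrix.diagonal h) 0)
    (ρ₀ : ℝ) (hρ₀ : IsLeast (Set.range fun i => h i ^ 2) ρ₀)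
    (cphi M₁ M₂ : ℝ) (hcphi : 0 < cphi) (hM₁ : 0 < M₁)
    (Vhat : Fin K → (Fin q ⊕ Fin p) → ℝ) (Z : Fin K → Fin q → ℝ)
    (Vbar : (Fin q ⊕ Fin p) → ℝ)
    (Chat : Matrix (Fin q ⊕ Fin p) (Fin q ⊕ Fin p) ℝ)
    (hChat : Chat = ((K : ℝ) - 1)⁻¹ • ∑ k, vecMulVec (Vhat k - Vbar) (Vhat k - Vbar))
    (Bhat : Matrix (Fin q) (Fin p) ℝ)
    (Θ Ξ : ℝ)
    (hΘ : Θ = Real.sqrt ((K : ℝ)⁻¹ * ∑ k, enormSq (H.mulVec (Vhat k) - Z k)))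
    (hΞ : Ξ = specNorm Bhat)
    (lam : ℝ) (hlam0 : 0 ≤ lam) (hlam : adaptiveInflation cphi M₁ M₂ Θ Ξ ≤ lam)
    (Ctil : Matrix (Fin q ⊕ Fin p) (Fin q ⊕ Fin p) ℝ) (hCtil : Ctil = Chat + lam • 1)
    (V : Fin K → (Fin q ⊕ Fin p) → ℝ)
    (hV : ∀ k, V k = Vhat k
      - (Ctil * Hᵀ * (1 + H * Ctil * Hᵀ)⁻¹).mulVec (H.mulVec (Vhat k) - Z k)) :
    ∀ k, enormSq (fun i => V k (Sum.inl i))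
      ≤ 2 * ρ₀⁻¹ * (K : ℝ) * max (M₁ ^ 2) (ρ₀⁻¹ ^ 2 * cphi⁻¹ ^ 2)
        + 2 * ρ₀⁻¹ * enormSq (Z k) := by
  obtain ⟨⟨i₀, hi₀⟩, hρ₀_le⟩ := hρ₀
  have hρ₀_pos : 0 < ρ₀ := hi₀ ▸ pow_pos (hpos i₀) 2
  have hK_one : (1 : ℝ) ≤ K := by exact_mod_cast one_le_two.trans hK
  have hChat_psd : Chat.PosSemidef :=
    hChat ▸ posSemidef_smul_sum_vecMulVec_self _ (inv_nonneg.mpr (sub_nonneg.mpr hK_one)) _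
  have hcoercive : ∀ x, (1 + lam * ρ₀) * enormSq x ≤ x ⬝ᵥ (1 + H * Ctil * Hᵀ) *ᵥ x := by
    rw [hCtil]
    refine one_add_mul_inflated_mul_transpose_coercive hChat_psd hlam0 fun x => ?_
    rw [hH, fromCols_diagonal_zero_mul_transpose]
    exact mul_enormSq_le_dotProduct_diagonal_mulVec (fun i => hρ₀_le ⟨i, rfl⟩) x
  have hunit := isUnit_of_coercive (by positivity) hcoercive
  intro k
  set u := (1 + H * Ctil * Hᵀ)⁻¹ *ᵥ (H *ᵥ Vhat k - Z k)
  have hobserved : h * (fun i => V k (Sum.inl i)) = Z k + u := by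
    rw [← fromCols_diagonal_zero_mulVec h (V k), ← hH, hV k, mulVec_sub_gain_mulVec hunit]
  have hu : enormSq u ≤ K * max (M₁ ^ 2) (ρ₀⁻¹ ^ 2 * cphi⁻¹ ^ 2) := by
    refine le_mul_max_of_adaptiveInflation_le hcphi hM₁ hρ₀_pos (Nat.cast_nonneg K)
      (hΘ ▸ Real.sqrt_nonneg _) (hΞ ▸ norm_nonneg _) hlam0 hlam (enormSq_nonneg u) ?_
    calc (1 + lam * ρ₀) ^ 2 * enormSq u ≤ enormSq ((1 + H * Ctil * Hᵀ) *ᵥ u) :=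
          sq_mul_enormSq_le_enormSq_mulVec (by positivity) hcoercive u
      _ = enormSq (H *ᵥ Vhat k - Z k) := by
          rw [mulVec_mulVec, mul_nonsing_inv _ ((isUnit_iff_isUnit_det _).mp hunit), one_mulVec]
      _ ≤ K * Θ ^ 2 := by
          simpa only [hΘ, Fintype.card_fin] using
            le_card_mul_sq_sqrt_inv_card_mul_sum
              (fun j => enormSq_nonneg (H *ᵥ Vhat j - Z j)) k
  have hX := (mul_enormSq_le_enormSq_mul (fun i => hρ₀_le ⟨i, rfl⟩) _).trans
    (hobserved ▸ enormSq_add_le (Z k) u)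
  calc enormSq (fun i => V k (Sum.inl i))
      = ρ₀⁻¹ * (ρ₀ * enormSq (fun i => V k (Sum.inl i))) := by field_simp
    _ ≤ ρ₀⁻¹ * (2 * enormSq (Z k) + 2 * (K * max (M₁ ^ 2) (ρ₀⁻¹ ^ 2 * cphi⁻¹ ^ 2))) := by
        gcongr
        linarith
    _ = _ := by ring

/-- **Observed-component bound after the EnKF-AI update.** In the EnKF-AI setting
(state space `(Fin q ⊕ Fin p) → ℝ` with observed components indexed by `Fin q`,
`H = (H₀, 0)`, `H₀ = diag(h)` with `h_i > 0`, `ρ₀` the minimum eigenvalue of `H₀H₀ᵀ`,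
statistics `Θ, Ξ`, inflation strength `λ ≥ φ(Θ,Ξ)`, inflated covariance `C̃ = Ĉ + λI`,
analysis update `V⁽ᵏ⁾ = V̂⁽ᵏ⁾ − C̃Hᵀ(I + HC̃Hᵀ)⁻¹(HV̂⁽ᵏ⁾ − Z⁽ᵏ⁾)`), writing
`V⁽ᵏ⁾ = (X⁽ᵏ⁾, Y⁽ᵏ⁾)`, the observed component satisfies
`|X⁽ᵏ⁾|² ≤ 2ρ₀⁻¹ K max {M₁², ρ₀⁻²c_φ⁻²} + 2ρ₀⁻¹ |Z⁽ᵏ⁾|²`. -/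
theorem enkf_ai_observed_component_bound {q p K : ℕ} (hK : 2 ≤ K)
    (h : Fin q → ℝ) (hpos : ∀ i, 0 < h i)
    (H : Matrix (Fin q) (Fin q ⊕ Fin p) ℝ)
    (hH : H = Matrix.fromCols (Matrix.diagonal h) 0)
    (ρ₀ : ℝ) (hρ₀ : IsLeast (Set.range fun i => h i ^ 2) ρ₀)
    (cphi M₁ M₂ : ℝ) (hcphi : 0 < cphi) (hM₁ : 0 < M₁) (hM₂ : 0 < M₂)
    (Vhat : Fin K → (Fin q ⊕ Fin p) → ℝ) (Z : Fin K → Fin q → ℝ)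
    (Vbar : (Fin q ⊕ Fin p) → ℝ) (hVbar : Vbar = (K : ℝ)⁻¹ • ∑ k, Vhat k)
    (Chat : Matrix (Fin q ⊕ Fin p) (Fin q ⊕ Fin p) ℝ)
    (hChat : Chat = ((K : ℝ) - 1)⁻¹ • ∑ k, vecMulVec (Vhat k - Vbar) (Vhat k - Vbar))
    (Bhat : Matrix (Fin q) (Fin p) ℝ)
    (hBhat : Bhat = ((K : ℝ) - 1)⁻¹ •
      ∑ k, vecMulVec (fun i => (Vhat k - Vbar) (Sum.inl i)) (fun j => (Vhat k - Vbar) (Sum.inr j)))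
    (Θ Ξ : ℝ)
    (hΘ : Θ = Real.sqrt ((K : ℝ)⁻¹ * ∑ k, enormSq (H.mulVec (Vhat k) - Z k)))
    (hΞ : Ξ = specNorm Bhat)
    (lam : ℝ) (hlam0 : 0 ≤ lam) (hlam : adaptiveInflation cphi M₁ M₂ Θ Ξ ≤ lam)
    (Ctil : Matrix (Fin q ⊕ Fin p) (Fin q ⊕ Fin p) ℝ) (hCtil : Ctil = Chat + lam • 1)
    (V : Fin K → (Fin q ⊕ Fin p) → ℝ)
    (hV : ∀ k, V k = Vhat k
      - (Ctil * Hᵀ * (1 + H * Ctil * Hᵀ)⁻¹).mulVec (H.mulVec (Vhat k) - Z k)) :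
    ∀ k, enormSq (fun i => V k (Sum.inl i))
      ≤ 2 * ρ₀⁻¹ * (K : ℝ) * max (M₁ ^ 2) (ρ₀⁻¹ ^ 2 * cphi⁻¹ ^ 2)
        + 2 * ρ₀⁻¹ * enormSq (Z k) :=
  enkf_ai_observed_component_bound_general hK h hpos H hH ρ₀ hρ₀ cphi M₁ M₂ hcphi hM₁ Vhat Z Vbar
    Chat hChat Bhat Θ Ξ hΘ hΞ lam hlam0 hlam Ctil hCtil V hV
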